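/- arXiv:2412.00861 — 3 statements merged into one kernel-verified Lean document; each statement's English description precedes it below -/
import Mathlib

section
/- With the same hypotheses, the function y₋(x) = Q(x)^{-1/4} · exp(-S₀(x)/ε) satisfies the same identity: ε²y₋'' - Q y₋ = ε² Q₂ y₋, with the same Q₂ = 5(Q'/(4Q))² - Q''/(4Q). In particular the relative residual is independent of the sign choice in the exponent. -/
/-!
Writing `y = A · exp(c S₀)` with `A = Q^{-1/4}`, one has `y' = g y` for the logarithmic
derivative `g = -Q'/(4Q) + c √Q`, hence `y'' = (g' + g²) y`. In `g' + g²` the cross term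
`-2c √Q · Q'/(4Q)` of `g²` cancels the term `c (√Q)' = c Q'/(2√Q)` of `g'` — this is what
the exponent `-1/4` of the amplitude is chosen for — leaving `y'' = (c² Q + Q₂) y`.
For `c = ∓1/ε` the term `c² ε² Q` is exactly `Q`, whatever the sign.
-/

open Real Filter Topology

theorem deriv_deriv_eq_of_hasDerivAt_mul_self {I : Set ℝ} (hI : IsOpen I) {y g : ℝ → ℝ}
    (hy : ∀ x ∈ I, HasDerivAt y (g x * y x) x) {x g' : ℝ} (hx : x ∈ I)
    (hg : HasDerivAt g g' x) :
    deriv (deriv y) x = (g' + g x ^ 2) * y x := by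
  have hderiv : deriv y =ᶠ[𝓝 x] fun t => g t * y t := by
    filter_upwards [hI.mem_nhds hx] with t ht using (hy t ht).deriv
  rw [hderiv.deriv_eq, (hg.fun_mul (hy x hx)).deriv]
  ring

section WKB

variable {Q Q' Q'' S : ℝ → ℝ} {x : ℝ}

theorem hasDerivAt_wkb (c : ℝ) (hQx : 0 < Q x) (hQ : HasDerivAt Q (Q' x) x)
    (hS : HasDerivAt S (√(Q x)) x) :
    HasDerivAt (fun t => Q t ^ (-(1 : ℝ) / 4) * exp (c * S t))
      ((-(Q' x / (4 * Q x)) + c * √(Q x)) * (Q x ^ (-(1 : ℝ) / 4) * exp (c * S x))) x := by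
  have hpow : Q x ^ (-(1 : ℝ) / 4 - 1) = Q x ^ (-(1 : ℝ) / 4) / Q x := by
    rw [rpow_sub hQx, rpow_one]
  refine ((hQ.rpow_const (p := -(1 : ℝ) / 4) (Or.inl hQx.ne')).mul
    (hS.const_mul c).exp).congr_deriv ?_
  rw [hpow]
  field_simp

theorem hasDerivAt_wkb_logDeriv (c : ℝ) (hQx : 0 < Q x) (hQ : HasDerivAt Q (Q' x) x)
    (hQ' : HasDerivAt Q' (Q'' x) x) :
    HasDerivAt (fun t => -(Q' t / (4 * Q t)) + c * √(Q t))
      (-((Q'' x * (4 * Q x) - Q' x * (4 * Q' x)) / (4 * Q x) ^ 2)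
        + c * (Q' x / (2 * √(Q x)))) x :=
  (hQ'.div (hQ.const_mul 4) (by positivity)).neg.add ((hQ.sqrt hQx.ne').const_mul c)

theorem deriv_deriv_wkb {I : Set ℝ} (hI : IsOpen I) (c : ℝ) (hQpos : ∀ x ∈ I, 0 < Q x)
    (hQ : ∀ x ∈ I, HasDerivAt Q (Q' x) x) (hQ' : ∀ x ∈ I, HasDerivAt Q' (Q'' x) x)
    (hS : ∀ x ∈ I, HasDerivAt S (√(Q x)) x) (hx : x ∈ I) :
    deriv (deriv fun t => Q t ^ (-(1 : ℝ) / 4) * exp (c * S t)) x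
      = (c ^ 2 * Q x + (5 * Q' x ^ 2 / (16 * Q x ^ 2) - Q'' x / (4 * Q x)))
        * (Q x ^ (-(1 : ℝ) / 4) * exp (c * S x)) := by
  have hQx := hQpos x hx
  rw [deriv_deriv_eq_of_hasDerivAt_mul_self hI
    (fun t ht => hasDerivAt_wkb c (hQpos t ht) (hQ t ht) (hS t ht)) hx
    (hasDerivAt_wkb_logDeriv c hQx (hQ x hx) (hQ' x hx))]
  congr 1
  set s := √(Q x)
  have hs : s ≠ 0 := (sqrt_pos.mpr hQx).ne'
  rw [show Q x = s ^ 2 from (sq_sqrt hQx.le).symm]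
  field_simp
  ring

end WKB

theorem wkb_backward_minus_general
    (ε : ℝ) (hε : ε ≠ 0) (I : Set ℝ) (hI : IsOpen I)
    (Q Q' Q'' S₀ y Q₂ : ℝ → ℝ)
    (hQpos : ∀ x ∈ I, 0 < Q x)
    (hQ : ∀ x ∈ I, HasDerivAt Q (Q' x) x)
    (hQ' : ∀ x ∈ I, HasDerivAt Q' (Q'' x) x)
    (hS₀ : ∀ x ∈ I, HasDerivAt S₀ (Real.sqrt (Q x)) x)
    (hy : ∀ x, y x = (Q x) ^ (-(1 : ℝ)/4) * Real.exp (-S₀ x / ε))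
    (hQ₂ : ∀ x ∈ I, Q₂ x = 5 * (Q' x)^2 / (16 * (Q x)^2) - Q'' x / (4 * Q x)) :
    ∀ x ∈ I, ε^2 * deriv (deriv y) x - Q x * y x = ε^2 * Q₂ x * y x := by
  intro x hx
  have hy' : y = fun t => Q t ^ (-(1 : ℝ) / 4) * exp (-ε⁻¹ * S₀ t) := by
    funext t
    rw [hy]
    congr 2
    ring
  rw [hy', deriv_deriv_wkb hI (-ε⁻¹) hQpos hQ hQ' hS₀ hx, hQ₂ x hx]
  field_simp
  ring

/-- **Backward WKB theorem, minus branch.**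
If `Q` is C² (with derivative `Q'` and second derivative `Q''`) and positive on an open
set `I`, `S₀` satisfies `S₀' = √Q` on `I`, and `y = Q^{-1/4} exp(-S₀/ε)` with `ε ≠ 0`,
then `ε² y'' - Q y = ε² Q₂ y` on `I`, where `Q₂ = 5 (Q'/(4Q))² - Q''/(4Q)`. -/
theorem wkb_backward_minus
    (ε : ℝ) (hε : ε ≠ 0) (I : Set ℝ) (hI : IsOpen I)
    (Q Q' Q'' S₀ y Q₂ : ℝ → ℝ)
    (hQpos : ∀ x ∈ I, 0 < Q x)
    (hQ : ∀ x ∈ I, HasDerivAt Q (Q' x) x)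
    (hQ' : ∀ x ∈ I, HasDerivAt Q' (Q'' x) x)
    (hQ''cont : ContinuousOn Q'' I)
    (hS₀ : ∀ x ∈ I, HasDerivAt S₀ (Real.sqrt (Q x)) x)
    (hy : ∀ x, y x = (Q x) ^ (-(1 : ℝ)/4) * Real.exp (-S₀ x / ε))
    (hQ₂ : ∀ x ∈ I, Q₂ x = 5 * (Q' x)^2 / (16 * (Q x)^2) - Q'' x / (4 * Q x)) :
    ∀ x ∈ I, ε^2 * deriv (deriv y) x - Q x * y x = ε^2 * Q₂ x * y x :=
  wkb_backward_minus_general ε hε I hI Q Q' Q'' S₀ y Q₂ hQpos hQ hQ' hS₀ hy hQ₂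
end

section
/- Under the same hypotheses, for any constants c₁, c₂, the general WKB approximation y = c₁ Q^{-1/4} e^{S₀/ε} + c₂ Q^{-1/4} e^{-S₀/ε} satisfies exactly ε²y'' = (Q + ε²Q₂) y, where Q₂ = 5(Q'/(4Q))² - Q''/(4Q). -/
set_option maxHeartbeats 1000000 in
/-- **Backward WKB theorem, general linear combination.**
Under the same hypotheses, for any constants `c₁, c₂`, the general WKB approximation
`y = c₁ Q^{-1/4} exp(S₀/ε) + c₂ Q^{-1/4} exp(-S₀/ε)` satisfies exactly
`ε² y'' = (Q + ε² Q₂) y` on `I`, with `Q₂ = 5 (Q'/(4Q))² - Q''/(4Q)`. -/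
theorem wkb_backward_general
    (ε : ℝ) (hε : ε ≠ 0) (c₁ c₂ : ℝ) (I : Set ℝ) (hI : IsOpen I)
    (Q Q' Q'' S₀ y Q₂ : ℝ → ℝ)
    (hQpos : ∀ x ∈ I, 0 < Q x)
    (hQ : ∀ x ∈ I, HasDerivAt Q (Q' x) x)
    (hQ' : ∀ x ∈ I, HasDerivAt Q' (Q'' x) x)
    (hQ''cont : ContinuousOn Q'' I)
    (hS₀ : ∀ x ∈ I, HasDerivAt S₀ (Real.sqrt (Q x)) x)
    (hy : ∀ x, y x = c₁ * (Q x) ^ (-(1 : ℝ)/4) * Real.exp (S₀ x / ε)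
                   + c₂ * (Q x) ^ (-(1 : ℝ)/4) * Real.exp (-S₀ x / ε))
    (hQ₂ : ∀ x ∈ I, Q₂ x = 5 * (Q' x)^2 / (16 * (Q x)^2) - Q'' x / (4 * Q x)) :
    ∀ x ∈ I, ε^2 * deriv (deriv y) x = (Q x + ε^2 * Q₂ x) * y x := by
  -- first derivative formula
  set D1 : ℝ → ℝ := fun t =>
      c₁ * (Q' t * (-(1 : ℝ)/4) * Q t ^ (-(1 : ℝ)/4 - 1) * Real.exp (S₀ t / ε)
            + Q t ^ (-(1 : ℝ)/4) * (Real.exp (S₀ t / ε) * (Real.sqrt (Q t) / ε)))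
    + c₂ * (Q' t * (-(1 : ℝ)/4) * Q t ^ (-(1 : ℝ)/4 - 1) * Real.exp (-S₀ t / ε)
            + Q t ^ (-(1 : ℝ)/4) * (Real.exp (-S₀ t / ε) * (-Real.sqrt (Q t) / ε)))
    with hD1def
  have hyF : y = fun t =>
      c₁ * (Q t ^ (-(1 : ℝ)/4) * Real.exp (S₀ t / ε))
      + c₂ * (Q t ^ (-(1 : ℝ)/4) * Real.exp (-S₀ t / ε)) := by
    funext t; rw [hy t]; ring
  have key : ∀ t ∈ I,
      HasDerivAt (fun s => Q s ^ (-(1 : ℝ)/4))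
        (Q' t * (-(1 : ℝ)/4) * Q t ^ (-(1 : ℝ)/4 - 1)) t ∧
      HasDerivAt (fun s => Real.exp (S₀ s / ε))
        (Real.exp (S₀ t / ε) * (Real.sqrt (Q t) / ε)) t ∧
      HasDerivAt (fun s => Real.exp (-S₀ s / ε))
        (Real.exp (-S₀ t / ε) * (-Real.sqrt (Q t) / ε)) t ∧
      HasDerivAt (fun s => Real.sqrt (Q s)) (Q' t / (2 * Real.sqrt (Q t))) t := by
    intro t ht
    have hqt := hQ t ht
    have hqpos := hQpos t ht
    refine ⟨hqt.rpow_const (Or.inl hqpos.ne'), ?_, ?_, hqt.sqrt hqpos.ne'⟩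
    · exact ((hS₀ t ht).div_const ε).exp
    · exact (((hS₀ t ht).neg).div_const ε).exp
  have hD1 : ∀ t ∈ I, HasDerivAt y (D1 t) t := by
    intro t ht
    obtain ⟨ha, hep, hem, -⟩ := key t ht
    rw [hyF]
    exact ((ha.mul hep).const_mul c₁).add ((ha.mul hem).const_mul c₂)
  intro x hx
  obtain ⟨ha, hep, hem, hsq⟩ := key x hx
  have hqx := hQ x hx
  have hqpos := hQpos x hx
  -- second derivatives of the pieces
  have hA' : HasDerivAt (fun t => Q' t * (-(1 : ℝ)/4) * Q t ^ (-(1 : ℝ)/4 - 1))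
      ((Q'' x * (-(1 : ℝ)/4)) * Q x ^ (-(1 : ℝ)/4 - 1)
        + (Q' x * (-(1 : ℝ)/4)) * (Q' x * (-(1 : ℝ)/4 - 1) * Q x ^ (-(1 : ℝ)/4 - 1 - 1))) x :=
    ((hQ' x hx).mul_const (-(1 : ℝ)/4)).mul (hqx.rpow_const (Or.inl hqpos.ne'))
  have hEp' : HasDerivAt (fun t => Real.exp (S₀ t / ε) * (Real.sqrt (Q t) / ε))
      ((Real.exp (S₀ x / ε) * (Real.sqrt (Q x) / ε)) * (Real.sqrt (Q x) / ε)
        + Real.exp (S₀ x / ε) * (Q' x / (2 * Real.sqrt (Q x)) / ε)) x :=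
    hep.mul (hsq.div_const ε)
  have hEm' : HasDerivAt (fun t => Real.exp (-S₀ t / ε) * (-Real.sqrt (Q t) / ε))
      ((Real.exp (-S₀ x / ε) * (-Real.sqrt (Q x) / ε)) * (-Real.sqrt (Q x) / ε)
        + Real.exp (-S₀ x / ε) * (-(Q' x / (2 * Real.sqrt (Q x))) / ε)) x :=
    hem.mul ((hsq.neg).div_const ε)
  have hD2 : HasDerivAt D1
      (c₁ * ((((Q'' x * (-(1 : ℝ)/4)) * Q x ^ (-(1 : ℝ)/4 - 1)
        + (Q' x * (-(1 : ℝ)/4)) * (Q' x * (-(1 : ℝ)/4 - 1) * Q x ^ (-(1 : ℝ)/4 - 1 - 1)))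
          * Real.exp (S₀ x / ε)
        + (Q' x * (-(1 : ℝ)/4) * Q x ^ (-(1 : ℝ)/4 - 1))
          * (Real.exp (S₀ x / ε) * (Real.sqrt (Q x) / ε)))
        + ((Q' x * (-(1 : ℝ)/4) * Q x ^ (-(1 : ℝ)/4 - 1))
          * (Real.exp (S₀ x / ε) * (Real.sqrt (Q x) / ε))
          + Q x ^ (-(1 : ℝ)/4)
            * ((Real.exp (S₀ x / ε) * (Real.sqrt (Q x) / ε)) * (Real.sqrt (Q x) / ε)
              + Real.exp (S₀ x / ε) * (Q' x / (2 * Real.sqrt (Q x)) / ε))))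
      + c₂ * ((((Q'' x * (-(1 : ℝ)/4)) * Q x ^ (-(1 : ℝ)/4 - 1)
        + (Q' x * (-(1 : ℝ)/4)) * (Q' x * (-(1 : ℝ)/4 - 1) * Q x ^ (-(1 : ℝ)/4 - 1 - 1)))
          * Real.exp (-S₀ x / ε)
        + (Q' x * (-(1 : ℝ)/4) * Q x ^ (-(1 : ℝ)/4 - 1))
          * (Real.exp (-S₀ x / ε) * (-Real.sqrt (Q x) / ε)))
        + ((Q' x * (-(1 : ℝ)/4) * Q x ^ (-(1 : ℝ)/4 - 1))
          * (Real.exp (-S₀ x / ε) * (-Real.sqrt (Q x) / ε))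
          + Q x ^ (-(1 : ℝ)/4)
            * ((Real.exp (-S₀ x / ε) * (-Real.sqrt (Q x) / ε)) * (-Real.sqrt (Q x) / ε)
              + Real.exp (-S₀ x / ε) * (-(Q' x / (2 * Real.sqrt (Q x))) / ε))))) x := by
    rw [hD1def]
    exact ((((hA'.mul hep).add (ha.mul hEp')).const_mul c₁).add
      (((hA'.mul hem).add (ha.mul hEm')).const_mul c₂))
  -- identify deriv (deriv y) x
  have hev : deriv y =ᶠ[nhds x] D1 := by
    filter_upwards [hI.mem_nhds hx] with t ht using (hD1 t ht).deriv
  rw [hev.deriv_eq, hD2.deriv, hy x, hQ₂ x hx]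
  -- algebra
  have hb : Q x ^ (-(1 : ℝ)/4 - 1) = Q x ^ (-(1 : ℝ)/4) / Q x := by
    rw [Real.rpow_sub hqpos, Real.rpow_one]
  have hc : Q x ^ (-(1 : ℝ)/4 - 1 - 1) = Q x ^ (-(1 : ℝ)/4) / Q x / Q x := by
    rw [Real.rpow_sub hqpos, Real.rpow_one, hb]
  have hs2 : Real.sqrt (Q x) * Real.sqrt (Q x) = Q x :=
    Real.mul_self_sqrt hqpos.le
  have hsne : Real.sqrt (Q x) ≠ 0 := (Real.sqrt_pos.mpr hqpos).ne'
  rw [hb, hc]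
  set a := Q x ^ (-(1 : ℝ)/4)
  set s := Real.sqrt (Q x)
  have hqne := hqpos.ne'
  rw [← hs2]
  field_simp
  ring
end

section
/- One functional iteration step doubles the formal order of the backward error: if Q₁ = Q - ε²Φ(Q) where Φ(Q) = 5(Q')²/(16Q²) - Q''/(4Q), and Q is C⁴ and positive with Q₁ positive, then Φ(Q₁) = Φ(Q) + O(ε²) pointwise as ε → 0; consequently Q₁ + ε²Φ(Q₁) = Q + O(ε⁴) pointwise, i.e., the WKB solution of the modified problem has residual O(ε⁴) relative to the original potential Q. -/
/-! Near `x` the derivatives of `Q₁ = Q - ε²Φ(Q)` are those of `Q` minus `ε²` times those of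
`Φ(Q)`, so `Φ(Q₁)(x)` is a rational function of `c = ε²`, regular at `c = 0` because `Q(x) ≠ 0`,
with value `Φ(Q)(x)` there. Being differentiable at `0`, it differs from `Φ(Q)(x)` by `O(ε²)`,
and the first-order terms cancel: `Q₁ + ε²Φ(Q₁) - Q = ε²(Φ(Q₁) - Φ(Q))`. -/

open Filter Asymptotics Topology

/-- The WKB backward-error map `Φ(Q) = 5(Q')²/(16Q²) - Q''/(4Q)`. -/
noncomputable def wkbPhi (G : ℝ → ℝ) : ℝ → ℝ :=
  fun t => 5 * (deriv G t)^2 / (16 * (G t)^2) - deriv (deriv G) t / (4 * G t)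

section

variable {U : Set ℝ} {f g : ℝ → ℝ} {x : ℝ}

theorem contDiffOn_wkbPhi {n : ℕ} {G : ℝ → ℝ} (hU : IsOpen U) (hG : ContDiffOn ℝ (n + 2) G U)
    (hG0 : ∀ t ∈ U, G t ≠ 0) : ContDiffOn ℝ n (wkbPhi G) U := by
  have hG' : ContDiffOn ℝ (n + 1) (deriv G) U := hG.deriv_of_isOpen hU le_rfl
  have hG'' : ContDiffOn ℝ n (deriv (deriv G)) U := hG'.deriv_of_isOpen hU le_rfl
  have hGn : ContDiffOn ℝ n G U := hG.of_le (by norm_cast; omega)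
  refine ContDiffOn.sub ?_ ?_
  · exact (contDiffOn_const.mul ((hG'.of_le (by norm_cast; omega)).pow 2)).div
      (contDiffOn_const.mul (hGn.pow 2)) fun t ht => by have := hG0 t ht; positivity
  · exact hG''.div (contDiffOn_const.mul hGn) fun t ht => by have := hG0 t ht; positivity

theorem deriv_sub_const_mul (c : ℝ) (hf : DifferentiableAt ℝ f x) (hg : DifferentiableAt ℝ g x) :
    deriv (fun t => f t - c * g t) x = deriv f x - c * deriv g x := by
  rw [deriv_fun_sub hf (hg.const_mul c), deriv_const_mul c hg]

theorem wkbPhi_sub_const_mul (hU : IsOpen U) (hf : ContDiffOn ℝ 2 f U) (hg : ContDiffOn ℝ 2 g U)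
    (hx : x ∈ U) (c : ℝ) :
    wkbPhi (fun t => f t - c * g t) x =
      5 * (deriv f x - c * deriv g x) ^ 2 / (16 * (f x - c * g x) ^ 2)
        - (deriv (deriv f) x - c * deriv (deriv g) x) / (4 * (f x - c * g x)) := by
  have hdiff {h : ℝ → ℝ} {n : WithTop ℕ∞} (hh : ContDiffOn ℝ n h U) (hn : n ≠ 0) {t} (ht : t ∈ U) :
      DifferentiableAt ℝ h t :=
    (hh.differentiableOn hn).differentiableAt (hU.mem_nhds ht)
  have hf' := hf.deriv_of_isOpen hU (m := 1) le_rfl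
  have hg' := hg.deriv_of_isOpen hU (m := 1) le_rfl
  have hderiv : deriv (fun t => f t - c * g t) =ᶠ[𝓝 x] fun t => deriv f t - c * deriv g t := by
    filter_upwards [hU.mem_nhds hx] with t ht
    exact deriv_sub_const_mul c (hdiff hf two_ne_zero ht) (hdiff hg two_ne_zero ht)
  rw [wkbPhi, hderiv.deriv_eq, hderiv.eq_of_nhds,
    deriv_sub_const_mul c (hdiff hf' one_ne_zero hx) (hdiff hg' one_ne_zero hx)]

theorem isBigO_wkbPhi_sub_const_mul (hU : IsOpen U) (hf : ContDiffOn ℝ 2 f U)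
    (hg : ContDiffOn ℝ 2 g U) (hx : x ∈ U) (hfx : f x ≠ 0) :
    (fun c => wkbPhi (fun t => f t - c * g t) x - wkbPhi f x) =O[𝓝 0] fun c => c := by
  simp_rw [wkbPhi_sub_const_mul hU hf hg hx]
  have hdiff : DifferentiableAt ℝ (fun c : ℝ =>
      5 * (deriv f x - c * deriv g x) ^ 2 / (16 * (f x - c * g x) ^ 2)
        - (deriv (deriv f) x - c * deriv (deriv g) x) / (4 * (f x - c * g x))) 0 := by
    refine (DifferentiableAt.div (by fun_prop) (by fun_prop) ?_).sub
      (DifferentiableAt.div (by fun_prop) (by fun_prop) ?_) <;> simpa using hfx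
  simpa [wkbPhi] using hdiff.isBigO_sub

end

/-- **One functional iteration doubles the formal order of the backward error.**
If `Q₁ = Q - ε² Φ(Q)` with `Q` C⁴ on an open set `I` and positive at `x ∈ I`, then
pointwise as `ε → 0`, `Φ(Q₁)(x) = Φ(Q)(x) + O(ε²)`, and consequently
`(Q₁ + ε² Φ(Q₁))(x) = Q(x) + O(ε⁴)`: the WKB solution of the modified problem has
backward error `O(ε⁴)` relative to the original potential. -/
theorem wkb_iteration_order_four
    (I : Set ℝ) (hI : IsOpen I) (x : ℝ) (hx : x ∈ I)
    (Q : ℝ → ℝ) (hQ : ContDiffOn ℝ 4 Q I) (hQpos : 0 < Q x) :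
    (fun ε : ℝ => wkbPhi (fun t => Q t - ε^2 * wkbPhi Q t) x - wkbPhi Q x)
        =O[nhds 0] (fun ε : ℝ => ε^2) ∧
    (fun ε : ℝ => ((fun t => Q t - ε^2 * wkbPhi Q t) x
        + ε^2 * wkbPhi (fun t => Q t - ε^2 * wkbPhi Q t) x) - Q x)
        =O[nhds 0] (fun ε : ℝ => ε^4) := by
  set U := I ∩ Q ⁻¹' Set.Ioi 0
  have hU : IsOpen U := hQ.continuousOn.isOpen_inter_preimage hI isOpen_Ioi
  have hQU : ContDiffOn ℝ 4 Q U := hQ.mono Set.inter_subset_left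
  have hPhi : ContDiffOn ℝ 2 (wkbPhi Q) U :=
    contDiffOn_wkbPhi (n := 2) hU hQU fun t ht => ht.2.ne'
  have hsq : Tendsto (fun ε : ℝ => ε ^ 2) (𝓝 0) (𝓝 0) := by
    simpa using (continuous_pow 2).tendsto (0 : ℝ)
  have hPhiQ₁ := (isBigO_wkbPhi_sub_const_mul hU (hQU.of_le (by norm_num)) hPhi ⟨hx, hQpos⟩
    hQpos.ne').comp_tendsto hsq
  refine ⟨hPhiQ₁, ?_⟩
  refine ((isBigO_refl (fun ε : ℝ => ε ^ 2) _).mul hPhiQ₁).congr (fun ε => ?_) (fun ε => ?_) <;>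
    simp only [Function.comp_apply] <;> ring
end
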